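/- arXiv:1512.00609 — 8 statements merged into one kernel-verified Lean document; each statement's English description precedes it below -/
import Mathlib

section
/- The map ℝⁿ → ℝ^{n+2} given by (x₁,…,xₙ) ↦ (1, x₁, …, xₙ, x₁² + ⋯ + xₙ²) is 3-regular: the images of any 3 distinct points of ℝⁿ are linearly independent. -/
/-!
A linear relation `∑ cᵢ (1, xᵢ, ‖xᵢ‖²) = 0` among lifted points forces `∑ cᵢ ‖xᵢ - v‖² = 0` for
every `v`. Taking `v = x₀, x₁, x₂` gives `D c = 0`, where `D` is the matrix of squared distances of
three distinct points; it is symmetric with zero diagonal and positive off-diagonal entries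
`a, b, d`, so `det D = 2abd ≠ 0` and `c = 0`.
-/

open Finset

theorem eq_zero_of_hollow_symmetric_three {c₀ c₁ c₂ a b d : ℝ} (ha : 0 < a) (hb : 0 < b)
    (hd : 0 < d) (h₀ : c₁ * a + c₂ * b = 0) (h₁ : c₀ * a + c₂ * d = 0)
    (h₂ : c₀ * b + c₁ * d = 0) : c₀ = 0 ∧ c₁ = 0 ∧ c₂ = 0 := by
  have hc₂ : c₂ = 0 := by
    have : c₂ * (2 * b * d) = 0 := by linear_combination b * h₁ + d * h₀ - a * h₂
    exact (mul_eq_zero.mp this).resolve_right (by positivity)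
  have hc₁ : c₁ = 0 := by
    have : c₁ * a = 0 := by linear_combination h₀ - b * hc₂
    exact (mul_eq_zero.mp this).resolve_right ha.ne'
  have hc₀ : c₀ = 0 := by
    have : c₀ * a = 0 := by linear_combination h₁ - d * hc₂
    exact (mul_eq_zero.mp this).resolve_right ha.ne'
  exact ⟨hc₀, hc₁, hc₂⟩

section Lift

variable {E : Type*} [NormedAddCommGroup E] [InnerProductSpace ℝ E]

def paraboloidLift (x : E) : ℝ × E × ℝ := (1, x, ‖x‖ ^ 2)

theorem sum_mul_norm_sub_sq_eq_zero {ι : Type*} [Fintype ι] {c : ι → ℝ} {x : ι → E}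
    (hc : ∑ i, c i • paraboloidLift (x i) = 0) (v : E) :
    ∑ i, c i * ‖x i - v‖ ^ 2 = 0 := by
  have h₀ : ∑ i, c i = 0 := by simpa [paraboloidLift, Prod.fst_sum] using congrArg Prod.fst hc
  have h₁ : ∑ i, c i • x i = 0 := by
    simpa [paraboloidLift, Prod.snd_sum, Prod.fst_sum] using congrArg (·.2.1) hc
  have h₂ : ∑ i, c i * ‖x i‖ ^ 2 = 0 := by
    simpa [paraboloidLift, Prod.snd_sum] using congrArg (·.2.2) hc
  calc ∑ i, c i * ‖x i - v‖ ^ 2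
      = ∑ i, (c i * ‖x i‖ ^ 2 - 2 * inner ℝ (c i • x i) v + c i * ‖v‖ ^ 2) := by
        refine sum_congr rfl fun i _ => ?_
        rw [norm_sub_sq_real, real_inner_smul_left]
        ring
    _ = ∑ i, c i * ‖x i‖ ^ 2 - 2 * inner ℝ (∑ i, c i • x i) v + (∑ i, c i) * ‖v‖ ^ 2 := by
        rw [sum_add_distrib, sum_sub_distrib, ← mul_sum, ← sum_inner, ← sum_mul]
    _ = 0 := by simp [h₀, h₁, h₂]

theorem linearIndependent_paraboloidLift {x : Fin 3 → E} (hx : Function.Injective x) :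
    LinearIndependent ℝ (paraboloidLift ∘ x) := by
  rw [Fintype.linearIndependent_iff]
  intro c hc
  have hD (k : Fin 3) : ∑ i, c i * ‖x i - x k‖ ^ 2 = 0 := sum_mul_norm_sub_sq_eq_zero hc (x k)
  have hpos {i j : Fin 3} (hij : i ≠ j) : 0 < ‖x i - x j‖ ^ 2 := by
    have : x i - x j ≠ 0 := sub_ne_zero.mpr (hx.ne hij)
    positivity
  obtain ⟨hc₀, hc₁, hc₂⟩ := eq_zero_of_hollow_symmetric_three (c₀ := c 0) (c₁ := c 1) (c₂ := c 2)
    (hpos (by decide : (1 : Fin 3) ≠ 0)) (hpos (by decide : (2 : Fin 3) ≠ 0))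
    (hpos (by decide : (2 : Fin 3) ≠ 1))
    (by simpa [Fin.sum_univ_three] using hD 0)
    (by simpa [Fin.sum_univ_three, norm_sub_rev (x 0)] using hD 1)
    (by simpa [Fin.sum_univ_three, norm_sub_rev (x 0), norm_sub_rev (x 1)] using hD 2)
  intro i
  fin_cases i <;> assumption

end Lift

/-- Splits `y : ℝ^{n+2}` as `(y₀, (y₁, …, yₙ), yₙ₊₁) ∈ ℝ × ℝⁿ × ℝ`. -/
def splitEnds (n : ℕ) : (Fin (n + 2) → ℝ) →ₗ[ℝ] ℝ × EuclideanSpace ℝ (Fin n) × ℝ :=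
  (LinearMap.proj 0).prod <|
    ((WithLp.linearEquiv 2 ℝ (Fin n → ℝ)).symm.toLinearMap ∘ₗ
      LinearMap.funLeft ℝ ℝ (fun j : Fin n => j.castSucc.succ)).prod
    (LinearMap.proj (Fin.last n).succ)

theorem splitEnds_cons_snoc {n : ℕ} (p : Fin n → ℝ) :
    splitEnds n (Fin.cons 1 (Fin.snoc p (∑ j, p j ^ 2))) = paraboloidLift (WithLp.toLp 2 p) := by
  simp [splitEnds, paraboloidLift, EuclideanSpace.real_norm_sq_eq, LinearMap.funLeft,
    Function.comp_def]

/-- The map `(x₁,…,xₙ) ↦ (1, x₁, …, xₙ, Σ xᵢ²)` from `ℝⁿ` to `ℝ^{n+2}` is 3-regular. -/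
theorem stmt2 (n : ℕ) :
    ∀ P : Fin 3 → (Fin n → ℝ), Function.Injective P →
      LinearIndependent ℝ (fun i : Fin 3 =>
        (Fin.cons 1 (Fin.snoc (P i) (∑ j, P i j ^ 2)) : Fin (n + 2) → ℝ)) := by
  intro P hP
  refine LinearIndependent.of_comp (splitEnds n) ?_
  convert linearIndependent_paraboloidLift ((WithLp.toLp_injective 2).comp hP) using 1
  ext1 i
  exact splitEnds_cons_snoc (P i)
end

section
/- For any field F and any r ≥ k−1, the affine Veronese map v_r : Fⁿ → F^{C(n+r,n)} sending a point x to the vector of all monomials in x₁,…,xₙ of degree at most r (including the constant monomial 1) is k-regular: the images of any k distinct points are linearly independent. -/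
/-!
If `∑ cᵢ v_r(Pᵢ) = 0`, pairing with the coefficient vector of any polynomial `q` of total degree
at most `r` gives `∑ cᵢ q(Pᵢ) = 0`. For distinct points `P₁, …, P_k` and a fixed `i₀`, a product of
`k - 1` affine linear forms, each separating one `Pᵢ` from `P_{i₀}` in some coordinate, vanishes at
every `Pᵢ` with `i ≠ i₀` but not at `P_{i₀}`; so `c_{i₀} = 0` as soon as `k - 1 ≤ r`.
-/

open MvPolynomial

section

variable {R σ ι : Type*}

def affineVeronese [CommSemiring R] [Fintype σ] (r : ℕ) (x : σ → R) :
    {a : σ → ℕ // ∑ j, a j ≤ r} → R :=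
  fun a => ∏ j, x j ^ a.1 j

theorem sum_mul_eval_eq_zero_of_sum_smul_affineVeronese_eq_zero [CommSemiring R] [Fintype σ]
    [Fintype ι] {r : ℕ} {P : ι → σ → R} {c : ι → R}
    (hc : ∑ i, c i • affineVeronese r (P i) = 0) {q : MvPolynomial σ R}
    (hq : q.totalDegree ≤ r) :
    ∑ i, c i * eval (P i) q = 0 := by
  simp_rw [eval_eq', Finset.mul_sum]
  rw [Finset.sum_comm]
  refine Finset.sum_eq_zero fun d hd => ?_
  have hd_deg : ∑ j, d j ≤ r := by
    rw [← Finsupp.sum_fintype d (fun _ e => e) fun _ => rfl]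
    exact (le_totalDegree hd).trans hq
  have hd_coord := congrFun hc ⟨d, hd_deg⟩
  simp only [Finset.sum_apply, Pi.smul_apply, smul_eq_mul, affineVeronese,
    Pi.zero_apply] at hd_coord
  calc ∑ i, c i * (q.coeff d * ∏ j, P i j ^ d j)
      = q.coeff d * ∑ i, c i * ∏ j, P i j ^ d j := by
        rw [Finset.mul_sum]
        exact Finset.sum_congr rfl fun i _ => by ring
    _ = 0 := by rw [hd_coord, mul_zero]

theorem exists_totalDegree_le_eval_eq_zero_of_ne [CommRing R] [IsDomain R] [Fintype ι]
    {P : ι → σ → R} (hP : Function.Injective P) (i₀ : ι) :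
    ∃ q : MvPolynomial σ R, q.totalDegree ≤ Fintype.card ι - 1 ∧
      (∀ i, i ≠ i₀ → eval (P i) q = 0) ∧ eval (P i₀) q ≠ 0 := by
  classical
  have hsep (i : {i // i ≠ i₀}) : ∃ j, P i j ≠ P i₀ j :=
    Function.ne_iff.1 (hP.ne i.2)
  choose j hj using hsep
  refine ⟨∏ i : {i // i ≠ i₀}, (X (j i) - C (P i (j i))), ?_, fun i hi => ?_, ?_⟩
  · calc _ ≤ ∑ i : {i // i ≠ i₀}, (X (j i) - C (P i (j i)) : MvPolynomial σ R).totalDegree :=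
          totalDegree_finsetProd _ _
      _ ≤ ∑ _i : {i // i ≠ i₀}, 1 :=
          Finset.sum_le_sum fun i _ => (totalDegree_sub_C_le _ _).trans (totalDegree_X _).le
      _ = Fintype.card ι - 1 := by simp [Fintype.card_subtype_compl]
  · rw [map_prod]
    exact Finset.prod_eq_zero (Finset.mem_univ ⟨i, hi⟩) (by simp)
  · rw [map_prod]
    refine Finset.prod_ne_zero_iff.2 fun i _ => ?_
    simpa [sub_eq_zero] using (hj i).symm

theorem linearIndependent_affineVeronese [CommRing R] [IsDomain R] [Fintype σ] [Fintype ι]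
    {r : ℕ} {P : ι → σ → R} (hP : Function.Injective P) (hr : Fintype.card ι - 1 ≤ r) :
    LinearIndependent R fun i => affineVeronese r (P i) := by
  rw [Fintype.linearIndependent_iff]
  intro c hc i₀
  obtain ⟨q, hq_deg, hq_zero, hq_ne⟩ := exists_totalDegree_le_eval_eq_zero_of_ne hP i₀
  have hsum := sum_mul_eval_eq_zero_of_sum_smul_affineVeronese_eq_zero hc (hq_deg.trans hr)
  rw [Finset.sum_eq_single i₀ (fun i _ hi => by rw [hq_zero i hi, mul_zero])
    (by simp)] at hsum
  exact (mul_eq_zero.1 hsum).resolve_right hq_ne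

end

/-- For any field `F` and `r ≥ k - 1`, the affine Veronese map of degree `r`, sending `x`
to the vector of values of all monomials of degree at most `r`, is `k`-regular. -/
theorem stmt4 (F : Type*) [Field F] (n k r : ℕ) (hr : k - 1 ≤ r) :
    ∀ P : Fin k → (Fin n → F), Function.Injective P →
      LinearIndependent F (fun i : Fin k =>
        fun a : {a : Fin n → ℕ // ∑ j, a j ≤ r} => ∏ j, P i j ^ a.1 j) := fun _ hP =>
  linearIndependent_affineVeronese hP (by rwa [Fintype.card_fin])
end

section
/- Let f = (f₁,…,f_N) : ℂⁿ → ℂᴺ be a polynomial map, and suppose there exists a positive integer weighting w of the variables x₁,…,xₙ such that each fᵢ is weighted-homogeneous (fᵢ(λ^{w(x₁)}x₁,…,λ^{w(xₙ)}xₙ) = λ^{dᵢ} fᵢ(x) for some dᵢ and all λ). If f is k-regular on some open neighborhood of 0 ∈ ℂⁿ, then f is k-regular on all of ℂⁿ. -/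
/-!
Scaling by the weighted torus action `x ↦ (t ^ w j * x j)_j` with `t ≠ 0` is injective, and as
`t → 0` it pushes any finitely many points into a given neighbourhood of `0`, where they have
linearly independent images. By weighted homogeneity the images of the scaled points are the
images of the original points with their `j`-th coordinates multiplied by `t ^ dⱼ`; as a linear
image of the original family, this family can only be independent if the original one is.
-/

open MvPolynomial Filter Topology

def weightedScale {R σ : Type*} [Monoid R] (w : σ → ℕ) (t : R) (x : σ → R) : σ → R :=
  fun j => t ^ w j * x j

section WeightedScale

variable {R σ : Type*} (w : σ → ℕ)

theorem weightedScale_injective [MonoidWithZero R] [IsCancelMulZero R] {t : R} (ht : t ≠ 0) :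
    Function.Injective (weightedScale w t) := fun _ _ h =>
  funext fun j => mul_left_cancel₀ (pow_ne_zero _ ht) (congrFun h j)

variable [MonoidWithZero R] [TopologicalSpace R] [ContinuousMul R]

theorem tendsto_weightedScale_zero (hw : ∀ j, 0 < w j) (x : σ → R) :
    Tendsto (fun t => weightedScale w t x) (𝓝 0) (𝓝 0) := by
  refine tendsto_pi_nhds.2 fun j => ?_
  have hcont : Continuous fun t : R => t ^ w j * x j := (continuous_pow _).mul continuous_const
  simpa [weightedScale, zero_pow (hw j).ne'] using hcont.tendsto 0

theorem eventually_forall_weightedScale_mem {ι : Type*} [Finite ι] (hw : ∀ j, 0 < w j)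
    (P : ι → σ → R) {U : Set (σ → R)} (hU : U ∈ 𝓝 0) :
    ∀ᶠ t in 𝓝 0, ∀ i, weightedScale w t (P i) ∈ U :=
  eventually_all.2 fun i => tendsto_weightedScale_zero w hw (P i) hU

end WeightedScale

theorem LinearIndependent.of_mul_coord {R ι κ : Type*} [CommSemiring R] {v : ι → κ → R}
    (c : κ → R) (h : LinearIndependent R fun i j => c j * v i j) : LinearIndependent R v :=
  h.of_comp (LinearMap.pi fun j => c j • (LinearMap.proj j : (κ → R) →ₗ[R] R))

/-- A polynomial map `ℂⁿ → ℂᴺ` whose components are homogeneous with respect to some positive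
weighting of the variables, and which is `k`-regular on a neighborhood of `0`, is globally
`k`-regular. -/
theorem stmt8 (n N k : ℕ) (f : Fin N → MvPolynomial (Fin n) ℂ)
    (w : Fin n → ℕ) (hw : ∀ j, 0 < w j)
    (hhom : ∀ i, ∃ d : ℕ, ∀ (lam : ℂ) (x : Fin n → ℂ),
      eval (fun j => lam ^ w j * x j) (f i) = lam ^ d * eval x (f i))
    (hloc : ∃ U ∈ nhds (0 : Fin n → ℂ), ∀ P : Fin k → (Fin n → ℂ),
      Function.Injective P → (∀ i, P i ∈ U) →
      LinearIndependent ℂ (fun i : Fin k => fun j : Fin N => eval (P i) (f j))) :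
    ∀ P : Fin k → (Fin n → ℂ), Function.Injective P →
      LinearIndependent ℂ (fun i : Fin k => fun j : Fin N => eval (P i) (f j)) := by
  intro P hP
  obtain ⟨U, hU, hreg⟩ := hloc
  choose d hd using hhom
  obtain ⟨t, htU, ht0⟩ :=
    ((eventually_forall_weightedScale_mem w hw P hU).filter_mono nhdsWithin_le_nhds).and
      (self_mem_nhdsWithin : {0}ᶜ ∈ 𝓝[≠] (0 : ℂ)) |>.exists
  have hscaled : LinearIndependent ℂ fun i j => eval (weightedScale w t (P i)) (f j) :=
    hreg _ ((weightedScale_injective w ht0).comp hP) htU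
  have hcoord : ∀ i j, eval (weightedScale w t (P i)) (f j) = t ^ d j * eval (P i) (f j) :=
    fun i j => hd j t (P i)
  simp only [hcoord] at hscaled
  exact hscaled.of_mul_coord (fun j => t ^ d j)
end

section
/- The map ℂ³ → ℂ¹¹ given by (s,t,u) ↦ (1, s, t, u, st, su, tu, s², s³ − t², t³ − u², u³) is 4-regular: the images of any 4 distinct points of ℂ³ are linearly independent in ℂ¹¹. -/
/-- The map `(s,t,u) ↦ (1, s, t, u, st, su, tu, s², s³−t², t³−u², u³)` from `ℂ³` to `ℂ¹¹`. -/
noncomputable def F4 : ℂ × ℂ × ℂ → Fin 11 → ℂ := fun p =>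
  ![1, p.1, p.2.1, p.2.2, p.1 * p.2.1, p.1 * p.2.2, p.2.1 * p.2.2, p.1 ^ 2,
    p.1 ^ 3 - p.2.1 ^ 2, p.2.1 ^ 3 - p.2.2 ^ 2, p.2.2 ^ 3]

/-!
Let `g` be weights on at most four distinct points of `ℂ³` that kill all eleven coordinates.
They kill `1, s, s²`. If the `s`-coordinates take at most three values, every `s`-fibre therefore
has total weight zero, hence at least two points; so there are at most two fibres, of two points
each, and the moments of `t, u, st, su` show that the two points of a fibre coincide. If the four
`s`-coordinates are distinct, the moments of `t` and `st` force `t` to be an affine function of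
`s` on the points, so the moment of `s³ - t²` becomes that of `s³`, and the Vandermonde
determinant kills `g`. Hence `s` is constant. With `s` constant, `t² = s³ - (s³ - t²)` is killed
and the same argument in the variables `(t, u)` makes `t` constant; then `1, u, u², u³` are
killed on distinct values of `u`, so `g = 0`.
-/

open Finset Polynomial

variable {ι K E : Type*} [Field K]

theorem eq_zero_of_sum_mul_pow_eq_zero {S : Finset ι} {x : ι → K} (hx : Set.InjOn x S) {n : ℕ}
    (hS : #S ≤ n) {w : ι → K} (hw : ∀ j < n, ∑ i ∈ S, w i * x i ^ j = 0) :
    ∀ i ∈ S, w i = 0 := by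
  classical
  intro i hi
  set q : K[X] := ∏ k ∈ S.erase i, (X - C (x k))
  have hq : q.natDegree < n := by
    rw [natDegree_finsetProd_X_sub_C_eq_card, card_erase_of_mem hi]
    have := card_pos.mpr ⟨i, hi⟩
    omega
  have hsum : ∑ k ∈ S, w k * q.eval (x k) = 0 := by
    simp_rw [eval_eq_sum_range' hq, mul_sum]
    rw [sum_comm]
    refine sum_eq_zero fun j hj => ?_
    simp_rw [mul_left_comm (w _), ← mul_sum, hw j (mem_range.mp hj), mul_zero]
  rw [sum_eq_single i] at hsum
  · refine (mul_eq_zero.mp hsum).resolve_right ?_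
    simp only [q, eval_prod, eval_sub, eval_X, eval_C]
    exact prod_ne_zero_iff.mpr fun k hk =>
      sub_ne_zero.mpr fun h => (ne_of_mem_erase hk) (hx (mem_of_mem_erase hk) hi h.symm)
  · intro k hk hki
    simp only [q, eval_prod, eval_sub, eval_X, eval_C]
    exact mul_eq_zero_of_right _ (prod_eq_zero (mem_erase.mpr ⟨hki, hk⟩) (sub_self _))
  · exact fun h => absurd hi h

theorem eq_zero_of_sum_eq_zero_of_sum_smul_eq_zero [AddCommGroup E] [Module K E] {S : Finset ι}
    {w : ι → E} (hw : Set.InjOn w S) (hS : #S ≤ 2) {g : ι → K} (h0 : ∑ i ∈ S, g i = 0)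
    (h1 : ∑ i ∈ S, g i • w i = 0) : ∀ i ∈ S, g i = 0 := by
  classical
  intro i hi
  have hsub : ∑ j ∈ S.erase i, g j • (w j - w i) = 0 := by
    rw [sum_erase _ (by simp)]
    simp [smul_sub, sum_sub_distrib, ← sum_smul, h0, h1]
  have hcard : #(S.erase i) ≤ 1 := by rw [card_erase_of_mem hi]; omega
  rw [← add_sum_erase _ _ hi] at h0
  rcases (S.erase i).eq_empty_or_nonempty with he | ⟨j, hj⟩
  · simpa [he] using h0
  · have hj' : S.erase i = {j} :=
      eq_singleton_iff_unique_mem.mpr ⟨hj, fun k hk => card_le_one.mp hcard k hk j hj⟩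
    rw [hj', sum_singleton, smul_eq_zero] at hsub
    have hgj : g j = 0 := hsub.resolve_right
      (sub_ne_zero.mpr fun h => ne_of_mem_erase hj (hw (mem_of_mem_erase hj) hi h))
    simpa [hj', hgj] using h0

theorem Set.InjOn.of_prod_of_forall_eq {α β : Type*} {S : Set ι} {s : ι → α} {w : ι → β}
    {a : α} (h : Set.InjOn (fun i => (s i, w i)) S) (ha : ∀ i ∈ S, s i = a) : Set.InjOn w S :=
  fun i hi j hj hij => h hi hj (Prod.ext ((ha i hi).trans (ha j hj).symm) hij)

theorem Finset.one_lt_card_of_sum_eq_zero {M : Type*} [AddCommMonoid M] {F : Finset ι}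
    {g : ι → M} (hF : F.Nonempty) (hg : ∀ i ∈ F, g i ≠ 0) (h : ∑ i ∈ F, g i = 0) : 1 < #F := by
  by_contra! hle
  obtain ⟨i, rfl⟩ := card_eq_one.mp (le_antisymm hle hF.card_pos)
  exact hg i (mem_singleton_self i) (by simpa using h)

theorem sum_fiber_eq_zero_of_sum_mul_pow_eq_zero [DecidableEq K] {S : Finset ι} {s : ι → K}
    {n : ℕ} (hT : #(S.image s) ≤ n) {g : ι → K} (hg : ∀ j < n, ∑ i ∈ S, g i * s i ^ j = 0) :
    ∀ σ ∈ S.image s, ∑ i ∈ S with s i = σ, g i = 0 := by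
  refine eq_zero_of_sum_mul_pow_eq_zero (Set.injOn_id _) hT fun j hj => ?_
  rw [← hg j hj, ← sum_fiberwise_of_maps_to (fun i hi => mem_image_of_mem s hi)]
  refine sum_congr rfl fun σ _ => ?_
  rw [sum_mul]
  exact sum_congr rfl fun i hi => by rw [(mem_filter.mp hi).2, id]

theorem exists_eq_add_mul_of_sum_mul_eq_zero {S : Finset ι} {s y : ι → K} (hs : Set.InjOn s S)
    (hS : #S ≤ 4) {g : ι → K} (hg : ∀ i ∈ S, g i ≠ 0) (h0 : ∑ i ∈ S, g i = 0)
    (h1 : ∑ i ∈ S, g i * s i = 0) (h2 : ∑ i ∈ S, g i * s i ^ 2 = 0) (hy : ∑ i ∈ S, g i * y i = 0)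
    (hsy : ∑ i ∈ S, g i * s i * y i = 0) {a b : ι} (ha : a ∈ S) (hb : b ∈ S)
    (hab : s a ≠ s b) : ∃ α β : K, ∀ i ∈ S, y i = α + β * s i := by
  classical
  set β := (y a - y b) / (s a - s b)
  set α := y a - β * s a
  set r := fun i => y i - (α + β * s i)
  have hra : r a = 0 := by simp only [r, α]; ring
  have hrb : r b = 0 := by
    simp only [r, α, β]
    field_simp [sub_ne_zero.mpr hab]
    ring
  have hab' : a ≠ b := fun h => hab (congrArg s h)
  have hr0 : ∑ i ∈ (S.erase a).erase b, g i * r i = 0 := by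
    rw [sum_erase _ (by simp [hrb]), sum_erase _ (by simp [hra])]
    calc ∑ i ∈ S, g i * r i
        = ∑ i ∈ S, g i * y i - α * ∑ i ∈ S, g i - β * ∑ i ∈ S, g i * s i := by
          simp only [mul_sum, ← sum_sub_distrib]
          exact sum_congr rfl fun i _ => by ring
      _ = 0 := by rw [hy, h0, h1]; ring
  have hr1 : ∑ i ∈ (S.erase a).erase b, (g i * r i) • s i = 0 := by
    rw [sum_erase _ (by simp [hrb]), sum_erase _ (by simp [hra])]
    calc ∑ i ∈ S, (g i * r i) • s i
        = ∑ i ∈ S, g i * s i * y i - α * ∑ i ∈ S, g i * s i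
            - β * ∑ i ∈ S, g i * s i ^ 2 := by
          simp only [mul_sum, ← sum_sub_distrib, smul_eq_mul]
          exact sum_congr rfl fun i _ => by ring
      _ = 0 := by rw [hsy, h1, h2]; ring
  have hS' : #((S.erase a).erase b) ≤ 2 := by
    rw [card_erase_of_mem (mem_erase.mpr ⟨hab'.symm, hb⟩), card_erase_of_mem ha]
    omega
  have hv := eq_zero_of_sum_eq_zero_of_sum_smul_eq_zero
    (hs.mono fun i hi => mem_of_mem_erase (mem_of_mem_erase hi)) hS' hr0 hr1
  refine ⟨α, β, fun i hi => sub_eq_zero.mp ?_⟩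
  by_cases hia : i = a
  · exact hia ▸ hra
  by_cases hib : i = b
  · exact hib ▸ hrb
  exact (mul_eq_zero.mp (hv i (mem_erase.mpr ⟨hib, mem_erase.mpr ⟨hia, hi⟩⟩))).resolve_left
    (hg i hi)

theorem sum_mul_eq_zero_of_sum_mul_cube_sub {S : Finset ι} {s v g : ι → K} {σ : K}
    (hσ : ∀ i ∈ S, s i = σ) (h0 : ∑ i ∈ S, g i = 0) (h : ∑ i ∈ S, g i * (s i ^ 3 - v i) = 0) :
    ∑ i ∈ S, g i * v i = 0 := by
  have : ∑ i ∈ S, g i * (s i ^ 3 - v i) = σ ^ 3 * ∑ i ∈ S, g i - ∑ i ∈ S, g i * v i := by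
    rw [mul_sum, ← sum_sub_distrib]
    exact sum_congr rfl fun i hi => by rw [hσ i hi]; ring
  rw [this, h0] at h
  linear_combination -h

section Moments

variable [AddCommGroup E] [Module K E] {S : Finset ι} {s : ι → K} {w : ι → E} {g : ι → K}

theorem sum_filter_smul_eq_zero_of_image_eq_pair [DecidableEq K] {σ τ : K}
    (hT : S.image s = {σ, τ}) (hστ : σ ≠ τ) (hw : ∑ i ∈ S, g i • w i = 0)
    (hsw : ∑ i ∈ S, (g i * s i) • w i = 0) : ∑ i ∈ S with s i = σ, g i • w i = 0 := by
  have hsplit :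
      ∑ i ∈ S, (g i * (s i - τ)) • w i = (σ - τ) • ∑ i ∈ S with s i = σ, g i • w i := by
    rw [← sum_filter_of_ne (p := (s · = σ)), smul_sum]
    · exact sum_congr rfl fun i hi => by rw [(mem_filter.mp hi).2, mul_comm, mul_smul]
    · intro i hi hne
      have : s i ∈ S.image s := mem_image_of_mem s hi
      rw [hT, mem_insert, mem_singleton] at this
      refine this.resolve_right fun h => hne ?_
      simp [h]
  have hzero : ∑ i ∈ S, (g i * (s i - τ)) • w i = 0 := calc
    _ = ∑ i ∈ S, (g i * s i) • w i - τ • ∑ i ∈ S, g i • w i := by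
      simp only [mul_sub, sub_smul, sum_sub_distrib, smul_sum, smul_smul, mul_comm τ]
    _ = 0 := by rw [hsw, hw, smul_zero, sub_zero]
  rw [hzero, eq_comm, smul_eq_zero] at hsplit
  exact hsplit.resolve_left (sub_ne_zero.mpr hστ)

theorem eq_of_moments_of_card_image_le_three [DecidableEq K]
    (hinj : Set.InjOn (fun i => (s i, w i)) S) (hS : #S ≤ 4) (hg : ∀ i ∈ S, g i ≠ 0)
    (hpow : ∀ j < 3, ∑ i ∈ S, g i * s i ^ j = 0) (hw : ∑ i ∈ S, g i • w i = 0)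
    (hsw : ∑ i ∈ S, (g i * s i) • w i = 0) (hT : #(S.image s) ≤ 3) {a b : ι} (ha : a ∈ S)
    (hb : b ∈ S) : s a = s b := by
  by_contra hab
  set F := fun σ => S.filter (s · = σ)
  have hC := sum_fiber_eq_zero_of_sum_mul_pow_eq_zero hT hpow
  have hF : ∀ σ ∈ S.image s, 2 ≤ #(F σ) := by
    intro σ hσ
    obtain ⟨i, hi, rfl⟩ := mem_image.mp hσ
    exact one_lt_card_of_sum_eq_zero ⟨i, mem_filter.mpr ⟨hi, rfl⟩⟩
      (fun k hk => hg k (mem_filter.mp hk).1) (hC _ hσ)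
  have hcard : #S = ∑ σ ∈ S.image s, #(F σ) :=
    card_eq_sum_card_fiberwise fun i hi => mem_image_of_mem s hi
  have hTab : S.image s = {s a, s b} := by
    refine (eq_of_subset_of_card_le (insert_subset_iff.mpr ⟨mem_image_of_mem s ha,
      singleton_subset_iff.mpr (mem_image_of_mem s hb)⟩) ?_).symm
    have := card_nsmul_le_sum (S.image s) (fun σ => #(F σ)) 2 hF
    rw [card_pair hab, smul_eq_mul] at *
    omega
  have hFa : #(F (s a)) ≤ 2 := by
    rw [hTab, sum_pair hab] at hcard
    have := hF (s b) (by simp [hTab])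
    omega
  have hwa : ∑ i ∈ F (s a), g i • w i = 0 :=
    sum_filter_smul_eq_zero_of_image_eq_pair hTab hab hw hsw
  have hinjw : Set.InjOn w (F (s a)) :=
    (hinj.mono (filter_subset _ _)).of_prod_of_forall_eq fun i hi => (mem_filter.mp hi).2
  exact hg a ha (eq_zero_of_sum_eq_zero_of_sum_smul_eq_zero hinjw hFa
    (hC _ (mem_image_of_mem s ha)) hwa a (mem_filter.mpr ⟨ha, rfl⟩))

theorem eq_of_moments_of_injOn (φ : E →ₗ[K] K) (hs : Set.InjOn s S) (hS : #S ≤ 4)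
    (hg : ∀ i ∈ S, g i ≠ 0) (hpow : ∀ j < 3, ∑ i ∈ S, g i * s i ^ j = 0)
    (hw : ∑ i ∈ S, g i • w i = 0) (hsw : ∑ i ∈ S, (g i * s i) • w i = 0)
    (h3 : ∑ i ∈ S, g i * (s i ^ 3 - φ (w i) ^ 2) = 0) {a b : ι} (ha : a ∈ S) (hb : b ∈ S) :
    s a = s b := by
  by_contra hab
  have hy : ∑ i ∈ S, g i * φ (w i) = 0 := by simpa using congrArg φ hw
  have hsy : ∑ i ∈ S, g i * s i * φ (w i) = 0 := by simpa using congrArg φ hsw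
  have h0 : ∑ i ∈ S, g i = 0 := by simpa using hpow 0 (by norm_num)
  have h1 : ∑ i ∈ S, g i * s i = 0 := by simpa using hpow 1 (by norm_num)
  have h2 := hpow 2 (by norm_num)
  obtain ⟨α, β, hl⟩ := exists_eq_add_mul_of_sum_mul_eq_zero hs hS hg h0 h1 h2 hy hsy ha hb hab
  have hy2 : ∑ i ∈ S, g i * φ (w i) ^ 2 = 0 := calc
    _ = α ^ 2 * ∑ i ∈ S, g i + 2 * α * β * ∑ i ∈ S, g i * s i
          + β ^ 2 * ∑ i ∈ S, g i * s i ^ 2 := by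
        simp only [mul_sum, ← sum_add_distrib]
        exact sum_congr rfl fun i hi => by rw [hl i hi]; ring
    _ = 0 := by rw [h0, h1, h2]; ring
  have h3' : ∑ i ∈ S, g i * s i ^ 3 = 0 := by
    simpa [mul_sub, sum_sub_distrib, hy2] using h3
  refine hg a ha (eq_zero_of_sum_mul_pow_eq_zero hs hS (fun j hj => ?_) a ha)
  obtain hj | rfl : j < 3 ∨ j = 3 := by omega
  exacts [hpow j hj, h3']

theorem exists_forall_eq_of_moments (φ : E →ₗ[K] K) (hinj : Set.InjOn (fun i => (s i, w i)) S)
    (hS : #S ≤ 4) (hg : ∀ i ∈ S, g i ≠ 0) (hpow : ∀ j < 3, ∑ i ∈ S, g i * s i ^ j = 0)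
    (hw : ∑ i ∈ S, g i • w i = 0) (hsw : ∑ i ∈ S, (g i * s i) • w i = 0)
    (h3 : ∑ i ∈ S, g i * (s i ^ 3 - φ (w i) ^ 2) = 0) : ∃ σ, ∀ i ∈ S, s i = σ := by
  classical
  rcases S.eq_empty_or_nonempty with rfl | ⟨a, ha⟩
  · simp
  refine ⟨s a, fun b hb => ?_⟩
  rcases le_or_gt #(S.image s) 3 with hT | hT
  · exact eq_of_moments_of_card_image_le_three hinj hS hg hpow hw hsw hT hb ha
  · have hs : Set.InjOn s S := card_image_iff.mp (le_antisymm card_image_le (by omega))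
    exact eq_of_moments_of_injOn φ hs hS hg hpow hw hsw h3 hb ha

end Moments

section F4

variable {S : Finset ι} {P : ι → ℂ × ℂ × ℂ} {g : ι → ℂ}

theorem exists_forall_fst_eq_of_sum_mul_F4_eq_zero (hinj : Set.InjOn P S) (hS : #S ≤ 4)
    (hg : ∀ i ∈ S, g i ≠ 0) (hF : ∀ k, ∑ i ∈ S, g i * F4 (P i) k = 0) :
    ∃ σ, ∀ i ∈ S, (P i).1 = σ :=
  exists_forall_eq_of_moments (LinearMap.fst ℂ ℂ ℂ) (s := fun i => (P i).1)
    (w := fun i => (P i).2) hinj hS hg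
    (fun j hj => by
      interval_cases j
      · simpa [F4] using hF 0
      · simpa [F4] using hF 1
      · simpa [F4] using hF 7)
    (Prod.ext (by simpa [F4, Prod.fst_sum] using hF 2) (by simpa [F4, Prod.snd_sum] using hF 3))
    (Prod.ext (by simpa [F4, Prod.fst_sum, mul_assoc] using hF 4)
      (by simpa [F4, Prod.snd_sum, mul_assoc] using hF 5))
    (by simpa [F4] using hF 8)

theorem exists_forall_snd_fst_eq_of_sum_mul_F4_eq_zero {σ : ℂ} (hinj : Set.InjOn P S)
    (hS : #S ≤ 4) (hg : ∀ i ∈ S, g i ≠ 0) (hF : ∀ k, ∑ i ∈ S, g i * F4 (P i) k = 0)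
    (hσ : ∀ i ∈ S, (P i).1 = σ) : ∃ τ, ∀ i ∈ S, (P i).2.1 = τ := by
  have h0 : ∑ i ∈ S, g i = 0 := by simpa [F4] using hF 0
  exact exists_forall_eq_of_moments LinearMap.id (s := fun i => (P i).2.1)
    (w := fun i => (P i).2.2) (hinj.of_prod_of_forall_eq hσ) hS hg
    (fun j hj => by
      interval_cases j
      · simpa using h0
      · simpa [F4] using hF 2
      · simpa using sum_mul_eq_zero_of_sum_mul_cube_sub hσ h0 (by simpa [F4] using hF 8))
    (by simpa [F4] using hF 3) (by simpa [F4, mul_assoc] using hF 6) (by simpa [F4] using hF 9)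

theorem eq_empty_of_sum_mul_F4_eq_zero (hinj : Set.InjOn P S) (hS : #S ≤ 4)
    (hg : ∀ i ∈ S, g i ≠ 0) (hF : ∀ k, ∑ i ∈ S, g i * F4 (P i) k = 0) : S = ∅ := by
  obtain ⟨σ, hσ⟩ := exists_forall_fst_eq_of_sum_mul_F4_eq_zero hinj hS hg hF
  obtain ⟨τ, hτ⟩ := exists_forall_snd_fst_eq_of_sum_mul_F4_eq_zero hinj hS hg hF hσ
  have h0 : ∑ i ∈ S, g i = 0 := by simpa [F4] using hF 0
  have hu := eq_zero_of_sum_mul_pow_eq_zero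
    ((hinj.of_prod_of_forall_eq hσ).of_prod_of_forall_eq hτ) hS (n := 4) fun j hj => by
      interval_cases j
      · simpa using h0
      · simpa [F4] using hF 3
      · simpa using sum_mul_eq_zero_of_sum_mul_cube_sub hτ h0 (by simpa [F4] using hF 9)
      · simpa [F4] using hF 10
  exact eq_empty_of_forall_notMem fun i hi => hg i hi (hu i hi)

end F4

/-- The map `(s,t,u) ↦ (1,s,t,u,st,su,tu,s²,s³−t²,t³−u²,u³)` is 4-regular. -/
theorem stmt10 :
    ∀ P : Fin 4 → ℂ × ℂ × ℂ, Function.Injective P →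
      LinearIndependent ℂ (fun i : Fin 4 => F4 (P i)) := by
  intro P hP
  rw [Fintype.linearIndependent_iff]
  intro g hg i
  have hF : ∀ k, ∑ j ∈ univ.filter (g · ≠ 0), g j * F4 (P j) k = 0 := fun k => by
    rw [sum_filter_of_ne fun j _ h => left_ne_zero_of_mul h]
    simpa using congrFun hg k
  have hS := eq_empty_of_sum_mul_F4_eq_zero hP.injOn ((card_le_univ _).trans (by simp))
    (fun j hj => (mem_filter.mp hj).2) hF
  simpa using filter_eq_empty_iff.mp hS (mem_univ i)
end

section
/- The map ℂ³ → ℂ¹⁴ given by (s,t,u) ↦ (1, s, t, u, st, su, tu, s², t², u², u³, t⁴ − s³, u⁴ − t³, s⁴) is 5-regular: the images of any 5 distinct points of ℂ³ are linearly independent in ℂ¹⁴. -/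
/-!
Suppose `∑ cᵣ F5 (Pᵣ) = 0`. The first ten coordinates of `F5` are the monomials of degree at
most 2, so `∑ cᵣ q (Pᵣ) = 0` for every quadratic `q`, in particular for every product of two
affine functions. If three points of the support were affinely independent, one of them could be
isolated from the other four points by such a product (one factor vanishing at the two points
outside the triple, the other at the rest of the triple), forcing its coefficient to vanish. So the
support lies on a line `a + x • d`. Along that line the quadratic coordinates give the moments
`∑ cᵣ xᵣᵏ = 0` for `k ≤ 2`, and `u³, t⁴ − s³, u⁴ − t³, s⁴` give `k = 3, 4`. Five vanishing
moments on at most five distinct nodes force `c = 0`.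
-/

/-- The map `(s,t,u) ↦ (1,s,t,u,st,su,tu,s²,t²,u²,u³,t⁴−s³,u⁴−t³,s⁴)` from `ℂ³` to `ℂ¹⁴`. -/
noncomputable def F5 : ℂ × ℂ × ℂ → Fin 14 → ℂ := fun p =>
  ![1, p.1, p.2.1, p.2.2, p.1 * p.2.1, p.1 * p.2.2, p.2.1 * p.2.2,
    p.1 ^ 2, p.2.1 ^ 2, p.2.2 ^ 2, p.2.2 ^ 3,
    p.2.1 ^ 4 - p.1 ^ 3, p.2.2 ^ 4 - p.2.1 ^ 3, p.1 ^ 4]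

open Finset Module Submodule Polynomial

section Moments

variable {K ι : Type*} [Field K] [Fintype ι] (c x : ι → K)

lemma sum_mul_eval_eq_zero_of_moments {n : ℕ} (h : ∀ k < n, ∑ r, c r * x r ^ k = 0)
    {p : K[X]} (hp : p.natDegree < n) : ∑ r, c r * p.eval (x r) = 0 := by
  simp_rw [eval_eq_sum_range' hp, mul_sum]
  rw [sum_comm]
  refine sum_eq_zero fun k hk => ?_
  simp_rw [mul_left_comm (c _), ← mul_sum, h k (mem_range.1 hk), mul_zero]

lemma eq_zero_of_moments_eq_zero (hx : Set.InjOn x {r | c r ≠ 0})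
    (h : ∀ k < Fintype.card ι, ∑ r, c r * x r ^ k = 0) : c = 0 := by
  classical
  set S : Finset ι := {r | c r ≠ 0}
  have hxS : Set.InjOn x S := by simpa [S] using hx
  refine funext fun i => by_contra fun hi => ?_
  have hiS : i ∈ S := by simpa [S] using hi
  have hdeg : (Lagrange.basis S x i).natDegree < Fintype.card ι := by
    rw [Lagrange.natDegree_basis hxS hiS]
    have := card_pos.2 ⟨i, hiS⟩
    have := S.card_le_univ
    omega
  have hsum := sum_mul_eval_eq_zero_of_moments c x h hdeg
  rw [sum_eq_single i (fun j _ hji => ?_) (by simp)] at hsum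
  · simp [Lagrange.eval_basis_self hxS hiS] at hsum
    exact hi hsum
  · by_cases hj : c j = 0
    · simp [hj]
    · simp [Lagrange.eval_basis_of_ne hji.symm (show j ∈ S by simpa [S] using hj)]

lemma sum_mul_add_mul_pow {n : ℕ} (h : ∀ k < n, ∑ r, c r * x r ^ k = 0) (α β : K) :
    ∑ r, c r * (α + x r * β) ^ n = β ^ n * ∑ r, c r * x r ^ n := by
  have key : ∀ r, c r * (α + x r * β) ^ n = β ^ n * (c r * x r ^ n) +
      ∑ k ∈ range n, (β ^ k * α ^ (n - k) * n.choose k) * (c r * x r ^ k) := by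
    intro r
    rw [add_comm, add_pow, sum_range_succ, mul_add, mul_sum]
    simp only [Nat.sub_self, pow_zero, Nat.choose_self, Nat.cast_one, mul_one]
    rw [add_comm]
    congr 1
    · ring
    · exact sum_congr rfl fun k _ => by ring
  simp_rw [key, sum_add_distrib, ← mul_sum]
  rw [sum_comm, add_eq_left]
  exact sum_eq_zero fun k hk => by rw [← mul_sum, h k (mem_range.1 hk), mul_zero]

lemma moments_succ_of_sum_mul_add_mul_pow {n : ℕ} (h : ∀ k < n, ∑ r, c r * x r ^ k = 0)
    {α β : K} (hβ : β ≠ 0) (hn : ∑ r, c r * (α + x r * β) ^ n = 0) :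
    ∀ k < n + 1, ∑ r, c r * x r ^ k = 0 := by
  rw [sum_mul_add_mul_pow c x h] at hn
  intro k hk
  rcases Nat.lt_succ_iff_lt_or_eq.1 hk with hk | rfl
  · exact h k hk
  · simpa [hβ] using hn

lemma sum_mul_add_mul_zero_pow (h : ∑ r, c r = 0) (α : K) (n : ℕ) :
    ∑ r, c r * (α + x r * 0) ^ n = 0 := by
  simp [← sum_mul, h]

end Moments

section Separation

variable {K V ι : Type*} [Field K] [AddCommGroup V] [Module K V] [Fintype ι]
  {c : ι → K} {v : ι → V}

lemma eq_zero_of_separated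
    (H : ∀ f g : Dual K V, ∑ r, c r * (f (v r) * g (v r)) = 0)
    {i : ι} {A B : Submodule K V} (hA : v i ∉ A) (hB : v i ∉ B)
    (hAB : ∀ r ≠ i, v r ∈ A ∨ v r ∈ B) : c i = 0 := by
  obtain ⟨f, hfi, hfA⟩ := exists_dual_map_eq_bot_of_notMem hA inferInstance
  obtain ⟨g, hgi, hgB⟩ := exists_dual_map_eq_bot_of_notMem hB inferInstance
  have hvanish : ∀ r ≠ i, f (v r) * g (v r) = 0 := fun r hr => by
    rcases hAB r hr with hr | hr
    · rw [LinearMap.le_ker_iff_map.2 hfA hr, zero_mul]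
    · rw [LinearMap.le_ker_iff_map.2 hgB hr, mul_zero]
  have := H f g
  rw [sum_eq_single i (fun r _ hr => by rw [hvanish r hr, mul_zero]) (by simp)] at this
  simpa [hfi, hgi] using this

lemma not_linearIndepOn_of_card_compl_lt [DecidableEq ι]
    (H : ∀ f g : Dual K V, ∑ r, c r * (f (v r) * g (v r)) = 0)
    {s : Finset ι} (hs : #sᶜ < #s) (hc : ∀ p ∈ s, c p ≠ 0) :
    ¬ LinearIndepOn K v (s : Set ι) := by
  intro hli
  set A := span K (Set.range fun r : ↥sᶜ => v r)
  obtain ⟨p, hps, hpA⟩ : ∃ p ∈ s, v p ∉ A := by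
    by_contra! hall
    have hle : span K (Set.range fun r : ↥(s : Set ι) => v r) ≤ A :=
      span_le.2 (Set.range_subset_iff.2 fun r => hall r r.2)
    have : FiniteDimensional K A := FiniteDimensional.span_of_finite K (Set.finite_range _)
    have h1 : finrank K (span K (Set.range fun r : ↥(s : Set ι) => v r)) = #s := by
      simpa using finrank_span_eq_card hli
    have h2 : finrank K A ≤ #sᶜ :=
      (finrank_range_le_card (R := K) fun r : ↥sᶜ => v r).trans_eq (Fintype.card_coe _)
    have h3 := Submodule.finrank_mono hle
    omega
  refine hc p hps <|
    eq_zero_of_separated H hpA (B := span K (v '' ↑(s.erase p))) ?_ fun r hr => ?_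
  · have hsub : (↑(s.erase p) : Set ι) ⊆ s := coe_subset.2 (erase_subset p s)
    rw [(hli.mono hsub).notMem_span_iff, ← coe_insert, insert_erase hps]
    exact ⟨hli, by simp⟩
  · by_cases hrs : r ∈ s
    · exact Or.inr (subset_span ⟨r, by simp [hrs, hr], rfl⟩)
    · exact Or.inl (subset_span ⟨⟨r, by simpa using hrs⟩, rfl⟩)

lemma mem_span_pair_of_card_le_five [DecidableEq ι]
    (H : ∀ f g : Dual K V, ∑ r, c r * (f (v r) * g (v r)) = 0) (hι : Fintype.card ι ≤ 5)
    {i j r : ι} (hne : i ≠ j) (hi : c i ≠ 0) (hj : c j ≠ 0) (hr : c r ≠ 0)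
    (hij : LinearIndepOn K v {i, j}) :
    v r ∈ span K {v i, v j} := by
  by_contra hmem
  have hrij : r ∉ ({i, j} : Set ι) := by
    rintro (rfl | rfl)
    exacts [hmem (subset_span (by simp)), hmem (subset_span (by simp))]
  have hli : LinearIndepOn K v (({r, i, j} : Finset ι) : Set ι) := by
    rw [coe_insert, coe_pair, linearIndepOn_insert hrij, Set.image_pair]
    exact ⟨hij, hmem⟩
  have hcard : #({r, i, j} : Finset ι) = 3 := by
    rw [card_insert_of_notMem (by simpa using hrij), card_pair hne]
  refine not_linearIndepOn_of_card_compl_lt H ?_ (by simp [hi, hj, hr]) hli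
  rw [card_compl, hcard]
  omega

end Separation

section AffineLift

variable {K : Type*} [Field K]

def affineLift (p : K × K × K) : Fin 4 → K := ![1, p.1, p.2.1, p.2.2]

lemma affineLift_injective : Function.Injective (affineLift (K := K)) := by
  intro p q h
  have h1 := congrFun h 1
  have h2 := congrFun h 2
  have h3 := congrFun h 3
  simp only [affineLift] at h1 h2 h3
  exact Prod.ext h1 (Prod.ext h2 h3)

lemma linearIndepOn_affineLift_pair {ι : Type*} {P : ι → K × K × K} {i j : ι}
    (hij : P i ≠ P j) : LinearIndepOn K (affineLift ∘ P) {i, j} := by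
  have hne : i ≠ j := fun h => hij (h ▸ rfl)
  refine (LinearIndepOn.pair_iff _ hne).2 fun a b hab => ?_
  have hb : b = -a := by
    have := congrFun hab 0
    simp [affineLift] at this
    linear_combination this
  subst hb
  rw [neg_smul, ← sub_eq_add_neg, ← smul_sub, smul_eq_zero, sub_eq_zero] at hab
  rcases hab with ha | h
  · simp [ha]
  · exact absurd (affineLift_injective h) hij

lemma exists_eq_add_smul_sub_of_affineLift_mem_span {p q r : K × K × K}
    (h : affineLift r ∈ span K {affineLift p, affineLift q}) : ∃ x : K, r = q + x • (p - q) := by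
  obtain ⟨a, b, hab⟩ := mem_span_pair.1 h
  have h0 := congrFun hab 0
  have h1 := congrFun hab 1
  have h2 := congrFun hab 2
  have h3 := congrFun hab 3
  simp [affineLift] at h0 h1 h2 h3
  refine ⟨a, Prod.ext ?_ (Prod.ext ?_ ?_)⟩ <;>
    simp only [Prod.fst_add, Prod.snd_add, Prod.smul_fst, Prod.smul_snd, Prod.fst_sub,
      Prod.snd_sub, smul_eq_mul]
  · linear_combination -h1 + q.1 * h0
  · linear_combination -h2 + q.2.1 * h0
  · linear_combination -h3 + q.2.2 * h0

end AffineLift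

lemma sum_mul_dual_affineLift_mul_eq_zero {ι : Type*} [Fintype ι] {c : ι → ℂ}
    {P : ι → ℂ × ℂ × ℂ} (hc : ∑ r, c r • F5 (P r) = 0) (f g : Dual ℂ (Fin 4 → ℂ)) :
    ∑ r, c r * (f (affineLift (P r)) * g (affineLift (P r))) = 0 := by
  set a : Fin 4 → ℂ := fun k => f fun j => if k = j then 1 else 0
  set b : Fin 4 → ℂ := fun k => g fun j => if k = j then 1 else 0
  set w : Fin 14 → ℂ := ![a 0 * b 0, a 0 * b 1 + a 1 * b 0, a 0 * b 2 + a 2 * b 0,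
    a 0 * b 3 + a 3 * b 0, a 1 * b 2 + a 2 * b 1, a 1 * b 3 + a 3 * b 1, a 2 * b 3 + a 3 * b 2,
    a 1 * b 1, a 2 * b 2, a 3 * b 3, 0, 0, 0, 0]
  have hw : ∀ p, f (affineLift p) * g (affineLift p) = w ⬝ᵥ F5 p := by
    intro p
    rw [LinearMap.pi_apply_eq_sum_univ f, LinearMap.pi_apply_eq_sum_univ g]
    simp only [Fin.sum_univ_four, smul_eq_mul]
    simp [Fin.sum_univ_succ, dotProduct, affineLift, F5, w]
    ring
  simp_rw [hw, ← smul_eq_mul, ← dotProduct_smul, ← dotProduct_sum, hc, dotProduct_zero]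

lemma moments_eq_zero_of_sum_smul_F5_line {ι : Type*} [Fintype ι] (c x : ι → ℂ)
    {a d : ℂ × ℂ × ℂ} (hd : d ≠ 0) (h : ∑ r, c r • F5 (a + x r • d) = 0) :
    ∀ k < 5, ∑ r, c r * x r ^ k = 0 := by
  obtain ⟨a₁, a₂, a₃⟩ := a
  obtain ⟨d₁, d₂, d₃⟩ := d
  have coord : ∀ j, ∑ r, c r * F5 ((a₁, a₂, a₃) + x r • (d₁, d₂, d₃)) j = 0 := fun j => by
    simpa using congrFun h j
  have h0 : ∀ k < 1, ∑ r, c r * x r ^ k = 0 := by simpa [F5] using coord 0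
  have hs1 := coord 1
  have hs2 := coord 7
  have hs4 := coord 13
  have ht1 := coord 2
  have ht2 := coord 8
  have hts := coord 11
  have hu1 := coord 3
  have hu2 := coord 9
  have hu3 := coord 10
  have hut := coord 12
  simp [F5, mul_sub, sum_sub_distrib, sub_eq_zero] at hs1 hs2 hs4 ht1 ht2 hts hu1 hu2 hu3 hut
  have hc0 : ∑ r, c r = 0 := by simpa using h0 0 one_pos
  -- Which coordinates yield the third and fourth moments depends on the last nonzero entry of `d`.
  by_cases hd₃ : d₃ = 0
  · subst hd₃
    by_cases hd₂ : d₂ = 0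
    · subst hd₂
      have hd₁ : d₁ ≠ 0 := by simpa using hd
      have h1 := moments_succ_of_sum_mul_add_mul_pow c x h0 hd₁ (by simpa using hs1)
      have h2 := moments_succ_of_sum_mul_add_mul_pow c x h1 hd₁ hs2
      have h3 := moments_succ_of_sum_mul_add_mul_pow c x h2 hd₁
        (by rw [← hts]; exact sum_mul_add_mul_zero_pow c x hc0 a₂ 4)
      exact moments_succ_of_sum_mul_add_mul_pow c x h3 hd₁ hs4
    · have h1 := moments_succ_of_sum_mul_add_mul_pow c x h0 hd₂ (by simpa using ht1)
      have h2 := moments_succ_of_sum_mul_add_mul_pow c x h1 hd₂ ht2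
      have h3 := moments_succ_of_sum_mul_add_mul_pow c x h2 hd₂
        (by rw [← hut]; exact sum_mul_add_mul_zero_pow c x hc0 a₃ 4)
      exact moments_succ_of_sum_mul_add_mul_pow c x h3 hd₂
        (by rw [hts, sum_mul_add_mul_pow (n := 3) c x h2, h3 3 (by norm_num), mul_zero])
  · have h1 := moments_succ_of_sum_mul_add_mul_pow c x h0 hd₃ (by simpa using hu1)
    have h2 := moments_succ_of_sum_mul_add_mul_pow c x h1 hd₃ hu2
    have h3 := moments_succ_of_sum_mul_add_mul_pow c x h2 hd₃ hu3
    exact moments_succ_of_sum_mul_add_mul_pow c x h3 hd₃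
      (by rw [hut, sum_mul_add_mul_pow (n := 3) c x h2, h3 3 (by norm_num), mul_zero])

/-- The map `(s,t,u) ↦ (1,s,t,u,st,su,tu,s²,t²,u²,u³,t⁴−s³,u⁴−t³,s⁴)` is 5-regular. -/
theorem stmt11 :
    ∀ P : Fin 5 → ℂ × ℂ × ℂ, Function.Injective P →
      LinearIndependent ℂ (fun i : Fin 5 => F5 (P i)) := by
  intro P hP
  refine Fintype.linearIndependent_iff.2 fun c hc => ?_
  by_contra! ⟨i, hi⟩
  have hquad := sum_mul_dual_affineLift_mul_eq_zero hc
  obtain ⟨j, hji, hj⟩ : ∃ j ≠ i, c j ≠ 0 := by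
    by_contra! hsupp
    have hsum : ∑ r, c r = 0 := by simpa [F5] using congrFun hc 0
    rw [sum_eq_single i (fun r _ hr => hsupp r hr) (by simp)] at hsum
    exact hi hsum
  have hline : ∀ r, c r ≠ 0 → ∃ x : ℂ, P r = P j + x • (P i - P j) := fun r hr =>
    exists_eq_add_smul_sub_of_affineLift_mem_span <|
      mem_span_pair_of_card_le_five hquad (by simp) hji.symm hi hj hr
        (linearIndepOn_affineLift_pair (hP.ne hji.symm))
  choose! x hx using hline
  have hsum : ∑ r, c r • F5 (P j + x r • (P i - P j)) = 0 := by
    rw [← hc]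
    refine sum_congr rfl fun r _ => ?_
    by_cases hr : c r = 0
    · simp [hr]
    · rw [← hx r hr]
  have hmoments := moments_eq_zero_of_sum_smul_F5_line c x (sub_ne_zero.2 (hP.ne hji.symm)) hsum
  have hinj : Set.InjOn x {r | c r ≠ 0} := fun a ha b hb hab =>
    hP (by rw [hx a ha, hx b hb, hab])
  exact hi (congrFun (eq_zero_of_moments_eq_zero c x hinj hmoments) i)
end

section
/- The map ℂⁿ → ℂ^{C(n+k-2,k-2)+n} given by all monomials of degree at most k−2 together with the n pure powers x₁^{k−1},…,xₙ^{k−1} is k-regular. -/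
/-!
Suppose `∑ i, c i • v (P i) = 0`. Then `∑ i, c i * p (P i) = 0` for every polynomial `p` of total
degree at most `k - 2`, and also for every polynomial of degree at most `k - 1` in a single
coordinate `x j`; by Lagrange interpolation in `x j`, the `c i` therefore sum to zero over every
fibre `{i | P i j = t}`. To get `c i₀ = 0` it suffices to find `p` of degree at most `k - 2` that
vanishes at the other points where `c` is nonzero but not at `P i₀`. If `c` vanishes off `i₀`, take
`p = 1`. Otherwise pick `i₁ ≠ i₀` with `c i₁ ≠ 0` and a coordinate `j` with `P i₁ j ≠ P i₀ j`. The
fibre of `i₁` in coordinate `j` has at least two points, so the hyperplane `x j = P i₁ j` together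
with one hyperplane through each of the at most `k - 3` remaining points and avoiding `P i₀` works.
-/

open Finset MvPolynomial

section

variable {ι σ K : Type*}

theorem sum_mul_eval_eq_zero_of_sum_mul_pow_eq_zero [Fintype ι] [CommSemiring K]
    {x c : ι → K} {d : ℕ} (h : ∀ m ≤ d, ∑ i, c i * x i ^ m = 0) {g : Polynomial K}
    (hg : g.natDegree ≤ d) :
    ∑ i, c i * g.eval (x i) = 0 := by
  simp_rw [Polynomial.eval_eq_sum_range' (Nat.lt_succ_of_le hg), mul_sum]
  rw [sum_comm]
  refine sum_eq_zero fun m hm => ?_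
  simp_rw [mul_left_comm (c _), ← mul_sum, h m (Nat.lt_succ_iff.1 (mem_range.1 hm)), mul_zero]

theorem sum_mul_eval_eq_zero_of_sum_mul_monomial_eq_zero [Fintype ι] [Fintype σ]
    [CommSemiring K] {P : ι → σ → K} {c : ι → K} {d : ℕ}
    (h : ∀ a : σ → ℕ, ∑ j, a j ≤ d → ∑ i, c i * ∏ j, P i j ^ a j = 0)
    {p : MvPolynomial σ K} (hp : p.totalDegree ≤ d) :
    ∑ i, c i * eval (P i) p = 0 := by
  simp_rw [eval_eq', mul_sum]
  rw [sum_comm]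
  refine sum_eq_zero fun a ha => ?_
  have had : ∑ j, a j ≤ d := by
    simpa [Finsupp.sum_fintype] using (le_totalDegree ha).trans hp
  simp_rw [mul_left_comm (c _), ← mul_sum, h a had, mul_zero]

theorem sum_filter_eq_zero_of_sum_mul_eval_eq_zero [Fintype ι] [Field K] [DecidableEq K]
    {x c : ι → K} {d : ℕ} (hcard : Fintype.card ι ≤ d + 1)
    (h : ∀ g : Polynomial K, g.natDegree ≤ d → ∑ i, c i * g.eval (x i) = 0) (i₀ : ι) :
    ∑ i ∈ univ.filter (fun i => x i = x i₀), c i = 0 := by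
  set V := univ.image x
  have hinj : Set.InjOn id (V : Set K) := Function.injective_id.injOn
  have hx₀ : x i₀ ∈ V := mem_image_of_mem x (mem_univ i₀)
  have hV : #V ≤ d + 1 := (card_image_le.trans_eq card_univ).trans hcard
  have hdeg : (Lagrange.basis V id (x i₀)).natDegree ≤ d := by
    rw [Lagrange.natDegree_basis hinj hx₀]
    omega
  rw [← h _ hdeg, sum_filter]
  refine sum_congr rfl fun i _ => ?_
  split_ifs with hi
  · rw [hi, show (Lagrange.basis V id (x i₀)).eval (x i₀) = 1 from
      Lagrange.eval_basis_self hinj hx₀, mul_one]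
  · rw [show (Lagrange.basis V id (x i₀)).eval (x i) = 0 from
      Lagrange.eval_basis_of_ne (v := id) (Ne.symm hi) (mem_image_of_mem x (mem_univ i)),
      mul_zero]

theorem exists_totalDegree_le_eval_eq_zero_eval_ne_zero [CommRing K] [IsDomain K]
    (P : ι → σ → K) (s : Finset ι) {x : σ → K} (hx : ∀ i ∈ s, P i ≠ x) :
    ∃ p : MvPolynomial σ K, p.totalDegree ≤ #s ∧ (∀ i ∈ s, eval (P i) p = 0) ∧ eval x p ≠ 0 := by
  classical
  induction s using Finset.induction_on with
  | empty => exact ⟨1, by simp, by simp, by simp⟩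
  | insert i s hi ih =>
    obtain ⟨p, hdeg, hvan, hne⟩ := ih fun i' hi' => hx i' (mem_insert_of_mem hi')
    obtain ⟨j, hj⟩ := Function.ne_iff.1 (hx i (mem_insert_self i s))
    refine ⟨(X j - C (P i j)) * p, ?_, ?_, ?_⟩
    · calc ((X j - C (P i j)) * p).totalDegree
          ≤ (X j - C (P i j) : MvPolynomial σ K).totalDegree + p.totalDegree :=
            totalDegree_mul _ _
        _ ≤ 1 + #s := add_le_add ((totalDegree_sub_C_le _ _).trans (totalDegree_X j).le) hdeg
        _ = #(insert i s) := by rw [card_insert_of_notMem hi, add_comm]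
    · intro i' hi'
      rcases mem_insert.1 hi' with rfl | hi'
      · simp
      · simp [hvan i' hi']
    · simpa [sub_eq_zero, hne] using hj.symm

theorem eq_zero_of_sum_mul_eval_eq_zero [Fintype ι] [DecidableEq ι] [CommRing K] [IsDomain K]
    [DecidableEq K]
    {P : ι → σ → K} (hP : Function.Injective P) {c : ι → K} {d : ℕ}
    (hcard : Fintype.card ι ≤ d + 2)
    (hpoly : ∀ p : MvPolynomial σ K, p.totalDegree ≤ d → ∑ i, c i * eval (P i) p = 0)
    (hfiber : ∀ j i₁, ∑ i ∈ univ.filter (fun i => P i j = P i₁ j), c i = 0) (i₀ : ι) :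
    c i₀ = 0 := by
  have of_separating : ∀ p : MvPolynomial σ K, p.totalDegree ≤ d →
      (∀ i ≠ i₀, c i ≠ 0 → eval (P i) p = 0) → eval (P i₀) p ≠ 0 → c i₀ = 0 := by
    intro p hp hvan hne
    have hsum := hpoly p hp
    rw [sum_eq_single i₀ (fun i _ hi => ?_) (by simp)] at hsum
    · exact (mul_eq_zero.1 hsum).resolve_right hne
    · by_cases hci : c i = 0
      · rw [hci, zero_mul]
      · rw [hvan i hi hci, mul_zero]
  by_cases hsupp : ∀ i ≠ i₀, c i = 0
  · exact of_separating 1 (by simp) (fun i hi hci => absurd (hsupp i hi) hci) (by simp)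
  push Not at hsupp
  obtain ⟨i₁, hi₁, hc₁⟩ := hsupp
  obtain ⟨j, hj⟩ := Function.ne_iff.1 (hP.ne hi₁)
  set F := univ.filter (fun i => P i j = P i₁ j)
  have hi₁F : i₁ ∈ F := by simp [F]
  have hi₀F : i₀ ∉ F := by simpa [F] using hj.symm
  have hF : 2 ≤ #F := by
    by_contra! hlt
    have hF₁ : F = {i₁} := eq_singleton_iff_unique_mem.2
      ⟨hi₁F, fun i hi => card_le_one.1 (by omega) i hi i₁ hi₁F⟩
    exact hc₁ (by simpa [← sum_singleton c i₁, ← hF₁] using hfiber j i₁)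
  set R := univ \ insert i₀ F
  have hR : #R + 1 ≤ d := by
    have : #R + #(insert i₀ F) = Fintype.card ι := card_sdiff_add_card_eq_card (subset_univ _)
    rw [card_insert_of_notMem hi₀F] at this
    omega
  obtain ⟨p, hpdeg, hpvan, hpne⟩ := exists_totalDegree_le_eval_eq_zero_eval_ne_zero P R
    fun i hi => hP.ne (show i ≠ i₀ by rintro rfl; simp [R] at hi)
  refine of_separating ((X j - C (P i₁ j)) * p) ?_ ?_ ?_
  · calc ((X j - C (P i₁ j)) * p).totalDegree
        ≤ (X j - C (P i₁ j) : MvPolynomial σ K).totalDegree + p.totalDegree :=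
          totalDegree_mul _ _
      _ ≤ 1 + #R := add_le_add ((totalDegree_sub_C_le _ _).trans (totalDegree_X j).le) hpdeg
      _ ≤ d := by omega
  · intro i hi _
    by_cases hiF : i ∈ F
    · simp [(mem_filter.1 hiF).2]
    · simp [hpvan i (by simp [R, hi, hiF])]
  · rw [map_mul]
    exact mul_ne_zero (by simpa [sub_eq_zero] using hj.symm) hpne

end

/-- The map `ℂⁿ → ℂ^{C(n+k−2,k−2)+n}` given by all monomials of degree at most `k − 2`
together with the `n` pure powers `xᵢ^{k−1}` is `k`-regular. -/
theorem stmt12 (n k : ℕ) :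
    ∀ P : Fin k → (Fin n → ℂ), Function.Injective P →
      LinearIndependent ℂ (fun i : Fin k =>
        (Sum.elim (fun a : {a : Fin n → ℕ // ∑ j, a j ≤ k - 2} => ∏ j, P i j ^ a.1 j)
          (fun j : Fin n => P i j ^ (k - 1)) :
          {a : Fin n → ℕ // ∑ j, a j ≤ k - 2} ⊕ Fin n → ℂ)) := by
  intro P hP
  rw [Fintype.linearIndependent_iff]
  intro c hc
  have hmonomial : ∀ a : Fin n → ℕ, ∑ j, a j ≤ k - 2 → ∑ i, c i * ∏ j, P i j ^ a j = 0 :=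
    fun a ha => by simpa using congrFun hc (Sum.inl ⟨a, ha⟩)
  have hpow : ∀ j, ∀ m ≤ k - 1, ∑ i, c i * P i j ^ m = 0 := by
    intro j m hm
    rcases hm.eq_or_lt with rfl | hlt
    · simpa using congrFun hc (Sum.inr j)
    · simpa [Pi.single_apply, pow_ite] using
        hmonomial (Pi.single j m) (by rw [sum_pi_single', if_pos (mem_univ j)]; omega)
  exact eq_zero_of_sum_mul_eval_eq_zero hP (d := k - 2) (by rw [Fintype.card_fin]; omega)
    (fun p hp => sum_mul_eval_eq_zero_of_sum_mul_monomial_eq_zero hmonomial hp)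
    (fun j i₁ => sum_filter_eq_zero_of_sum_mul_eval_eq_zero
      (by rw [Fintype.card_fin]; omega)
      (fun g hg => sum_mul_eval_eq_zero_of_sum_mul_pow_eq_zero (hpow j) hg) i₁)
end

section
/- The map ℂ² → ℂ⁸ given by (s,t) ↦ (1, s, t, st, s², t², s³, t³) is 4-regular. -/
/-- The map `(s,t) ↦ (1, s, t, st, s², t², s³, t³)` from `ℂ²` to `ℂ⁸`. -/
noncomputable def G4 : ℂ × ℂ → Fin 8 → ℂ := fun p =>
  ![1, p.1, p.2, p.1 * p.2, p.1 ^ 2, p.2 ^ 2, p.1 ^ 3, p.2 ^ 3]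

/-!
Linear independence follows once each point `p` of the four can be separated from the other
three by a function `φ ∘ G4`, i.e. by a polynomial in the span of `1, s, t, st, s², t², s³, t³`
vanishing at the three others but not at `p`. If `p` is not collinear with two of the others,
take the product of the line through these two and a line through the third one that misses `p`.
Otherwise all four points lie on one line; then either they all have the same `s`-coordinate and
the cubic `∏ (t - tₖ)` separates, or none of the others shares its `s`-coordinate with `p` and
`∏ (s - sₖ)` does.
-/

open Module

theorem LinearIndependent.of_pairwise_dual_eq_zero_of_ne_zero {K M ι : Type*} [Field K]
    [AddCommGroup M] [Module K M] (v : ι → M) (f : ι → Dual K M)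
    (h1 : Pairwise fun i j ↦ f i (v j) = 0) (h2 : ∀ i, f i (v i) ≠ 0) :
    LinearIndependent K v :=
  .of_pairwise_dual_eq_zero_one v (fun i ↦ (f i (v i))⁻¹ • f i)
    (fun i j hij ↦ by simp [h1 hij]) (fun i ↦ by simp [h2 i])

section Plane

variable {K : Type*} [CommRing K]

def det2 (u v : K × K) : K := u.1 * v.2 - u.2 * v.1

theorem fst_eq_zero_iff_of_det2_eq_zero [NoZeroDivisors K] {u v : K × K} (h : det2 u v = 0)
    (hu : u ≠ 0) (hv : v ≠ 0) : u.1 = 0 ↔ v.1 = 0 := by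
  unfold det2 at h
  constructor
  · intro hu1
    have hu2 : u.2 ≠ 0 := fun hu2 ↦ hu (Prod.ext hu1 hu2)
    simpa [hu1, hu2] using h
  · intro hv1
    have hv2 : v.2 ≠ 0 := fun hv2 ↦ hv (Prod.ext hv1 hv2)
    simpa [hv1, hv2] using h

def IsAffine (f : K × K → K) : Prop :=
  ∃ α β γ : K, ∀ x, f x = α + β * x.1 + γ * x.2

theorem isAffine_det2_sub_sub (q r : K × K) : IsAffine fun x ↦ det2 (q - x) (r - x) :=
  ⟨q.1 * r.2 - q.2 * r.1, q.2 - r.2, r.1 - q.1, fun x ↦ by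
    simp only [det2, Prod.fst_sub, Prod.snd_sub]
    ring⟩

theorem exists_isAffine_separating {p q : K × K} (h : q ≠ p) :
    ∃ f, IsAffine f ∧ f q = 0 ∧ f p ≠ 0 := by
  by_cases h1 : q.1 = p.1
  · have h2 : q.2 ≠ p.2 := fun h2 ↦ h (Prod.ext h1 h2)
    exact ⟨fun x ↦ x.2 - q.2, ⟨-q.2, 0, 1, fun x ↦ by ring⟩, sub_self _, sub_ne_zero.2 h2.symm⟩
  · exact ⟨fun x ↦ x.1 - q.1, ⟨-q.1, 1, 0, fun x ↦ by ring⟩, sub_self _, sub_ne_zero.2 (Ne.symm h1)⟩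

end Plane

def IsG4Polynomial (f : ℂ × ℂ → ℂ) : Prop :=
  ∃ φ : Dual ℂ (Fin 8 → ℂ), ∀ x, φ (G4 x) = f x

theorem isG4Polynomial_of_forall_eq {f : ℂ × ℂ → ℂ} (a₀ a₁ a₂ a₃ a₄ a₅ a₆ a₇ : ℂ)
    (h : ∀ x, f x = a₀ + a₁ * x.1 + a₂ * x.2 + a₃ * (x.1 * x.2) + a₄ * x.1 ^ 2 + a₅ * x.2 ^ 2
      + a₆ * x.1 ^ 3 + a₇ * x.2 ^ 3) :
    IsG4Polynomial f :=
  ⟨dotProductEquiv ℂ (Fin 8) ![a₀, a₁, a₂, a₃, a₄, a₅, a₆, a₇], fun x ↦ by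
    rw [h, dotProductEquiv_apply_apply, dotProduct, Fin.sum_univ_eight]
    simp [G4]⟩

theorem IsAffine.isG4Polynomial_mul {f g : ℂ × ℂ → ℂ} (hf : IsAffine f) (hg : IsAffine g) :
    IsG4Polynomial fun x ↦ f x * g x := by
  obtain ⟨α₁, β₁, γ₁, hf⟩ := hf
  obtain ⟨α₂, β₂, γ₂, hg⟩ := hg
  exact isG4Polynomial_of_forall_eq (α₁ * α₂) (α₁ * β₂ + β₁ * α₂) (α₁ * γ₂ + γ₁ * α₂)
    (β₁ * γ₂ + γ₁ * β₂) (β₁ * β₂) (γ₁ * γ₂) 0 0 fun x ↦ by rw [hf, hg]; ring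

theorem isG4Polynomial_prod_fst_sub (a : Fin 3 → ℂ) :
    IsG4Polynomial fun x ↦ ∏ k, (x.1 - a k) :=
  isG4Polynomial_of_forall_eq (-(a 0 * a 1 * a 2)) (a 0 * a 1 + a 0 * a 2 + a 1 * a 2) 0 0
    (-(a 0 + a 1 + a 2)) 0 1 0 fun x ↦ by rw [Fin.prod_univ_three]; ring

theorem isG4Polynomial_prod_snd_sub (a : Fin 3 → ℂ) :
    IsG4Polynomial fun x ↦ ∏ k, (x.2 - a k) :=
  isG4Polynomial_of_forall_eq (-(a 0 * a 1 * a 2)) 0 (a 0 * a 1 + a 0 * a 2 + a 1 * a 2) 0 0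
    (-(a 0 + a 1 + a 2)) 0 1 fun x ↦ by rw [Fin.prod_univ_three]; ring

theorem exists_isG4Polynomial_separating_of_det2_ne_zero {p q r s : ℂ × ℂ}
    (h : det2 (q - p) (r - p) ≠ 0) (hs : s ≠ p) :
    ∃ f, IsG4Polynomial f ∧ f q = 0 ∧ f r = 0 ∧ f s = 0 ∧ f p ≠ 0 := by
  obtain ⟨g, hg, hgs, hgp⟩ := exists_isAffine_separating hs
  refine ⟨fun x ↦ det2 (q - x) (r - x) * g x, (isAffine_det2_sub_sub q r).isG4Polynomial_mul hg,
    ?_, ?_, by simp [hgs], mul_ne_zero h hgp⟩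
  · simp [det2]
  · simp [det2]

theorem exists_isG4Polynomial_separating (p : ℂ × ℂ) (q : Fin 3 → ℂ × ℂ) (hq : ∀ k, q k ≠ p) :
    ∃ f, IsG4Polynomial f ∧ (∀ k, f (q k) = 0) ∧ f p ≠ 0 := by
  obtain h01 | h01 := ne_or_eq (det2 (q 0 - p) (q 1 - p)) 0
  · obtain ⟨f, hf, h0, h1, h2, hp⟩ := exists_isG4Polynomial_separating_of_det2_ne_zero h01 (hq 2)
    exact ⟨f, hf, Fin.forall_fin_succ.2 ⟨h0, Fin.forall_fin_two.2 ⟨h1, h2⟩⟩, hp⟩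
  obtain h02 | h02 := ne_or_eq (det2 (q 0 - p) (q 2 - p)) 0
  · obtain ⟨f, hf, h0, h2, h1, hp⟩ := exists_isG4Polynomial_separating_of_det2_ne_zero h02 (hq 1)
    exact ⟨f, hf, Fin.forall_fin_succ.2 ⟨h0, Fin.forall_fin_two.2 ⟨h1, h2⟩⟩, hp⟩
  have hline : ∀ k, (q 0).1 = p.1 ↔ (q k).1 = p.1 := by
    have hdet : ∀ k, det2 (q 0 - p) (q k - p) = 0 :=
      Fin.forall_fin_succ.2 ⟨by unfold det2; ring, Fin.forall_fin_two.2 ⟨h01, h02⟩⟩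
    intro k
    simpa [sub_eq_zero] using fst_eq_zero_iff_of_det2_eq_zero (hdet k)
      (sub_ne_zero.2 (hq 0)) (sub_ne_zero.2 (hq k))
  by_cases hvert : (q 0).1 = p.1
  · have hsnd : ∀ k, (q k).2 ≠ p.2 := fun k h ↦ hq k (Prod.ext ((hline k).1 hvert) h)
    exact ⟨_, isG4Polynomial_prod_snd_sub fun k ↦ (q k).2,
      fun k ↦ Finset.prod_eq_zero (Finset.mem_univ k) (sub_self _),
      Finset.prod_ne_zero_iff.2 fun k _ ↦ sub_ne_zero.2 (hsnd k).symm⟩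
  · exact ⟨_, isG4Polynomial_prod_fst_sub fun k ↦ (q k).1,
      fun k ↦ Finset.prod_eq_zero (Finset.mem_univ k) (sub_self _),
      Finset.prod_ne_zero_iff.2 fun k _ ↦ sub_ne_zero.2 fun h ↦ hvert ((hline k).2 h.symm)⟩

/-- The map `(s,t) ↦ (1, s, t, st, s², t², s³, t³)` is 4-regular. -/
theorem stmt13 :
    ∀ P : Fin 4 → ℂ × ℂ, Function.Injective P →
      LinearIndependent ℂ (fun i : Fin 4 => G4 (P i)) := by
  intro P hP
  have hsep : ∀ i, ∃ φ : Dual ℂ (Fin 8 → ℂ),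
      (∀ j, j ≠ i → φ (G4 (P j)) = 0) ∧ φ (G4 (P i)) ≠ 0 := by
    intro i
    obtain ⟨f, ⟨φ, hφ⟩, hq, hp⟩ := exists_isG4Polynomial_separating (P i) (P ∘ i.succAbove)
      fun k ↦ hP.ne (Fin.succAbove_ne i k)
    refine ⟨φ, fun j hj ↦ ?_, by rwa [hφ]⟩
    obtain ⟨k, rfl⟩ := Fin.exists_succAbove_eq hj
    rw [hφ]
    exact hq k
  choose φ hφ using hsep
  exact .of_pairwise_dual_eq_zero_of_ne_zero _ φ (fun i j hij ↦ (hφ i).1 j hij.symm)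
    fun i ↦ (hφ i).2
end

section
/- Let ℂ[x]/(x^k) with k > 3, let m be a mixed monomial of degree k−1 in x₁,…,xₙ (i.e., not a pure power), and let α : ℂ[x₁,…,xₙ] → ℂ[x]/(x^k) be any ℂ-algebra homomorphism with α(xᵢ) ∈ (x) for all i. If α(m) = c·x^{k−1} with c ≠ 0, then for any variable xᵢ dividing m, writing α(xᵢ) = a₁x + a₂x² + ⋯, we have a₁ ≠ 0, and the element m − (c/a₁^{k−1})·xᵢ^{k−1} lies in the kernel of α. -/
/-! Lift each `α(xⱼ)` to a polynomial `fⱼ = bⱼ x + ⋯`. Since every `fⱼ` is divisible by `x`, a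
monomial of degree `d` in the `fⱼ` is `(∏ bⱼ ^ eⱼ) x ^ d` modulo `x ^ (d + 1)`. With `d = k - 1`
the hypothesis on `α(m)` therefore reads `c = ∏ bⱼ ^ aⱼ`, so `bᵢ ≠ 0` whenever `xᵢ ∣ m`, and
`α(xᵢ ^ (k - 1)) = bᵢ ^ (k - 1) x ^ (k - 1)` produces the kernel element. -/
open MvPolynomial

namespace Polynomial

variable {R : Type*} [CommRing R]

theorem X_pow_succ_dvd_X_pow_mul_sub (p : R[X]) (d : ℕ) :
    X ^ (d + 1) ∣ X ^ d * p - C (p.coeff 0) * X ^ d :=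
  ⟨p.divX, by linear_combination (-X ^ d : R[X]) * X_mul_divX_add p⟩

theorem X_pow_succ_dvd_prod_pow_sub {ι : Type*} (s : Finset ι) (f : ι → R[X]) (e : ι → ℕ)
    (hf : ∀ j ∈ s, X ∣ f j) :
    X ^ ((∑ j ∈ s, e j) + 1) ∣
      ∏ j ∈ s, f j ^ e j - C (∏ j ∈ s, (f j).coeff 1 ^ e j) * X ^ ∑ j ∈ s, e j := by
  have hprod : ∏ j ∈ s, f j ^ e j = X ^ (∑ j ∈ s, e j) * ∏ j ∈ s, (f j).divX ^ e j := by
    rw [← Finset.prod_pow_eq_pow_sum, ← Finset.prod_mul_distrib]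
    refine Finset.prod_congr rfl fun j hj => ?_
    have := X_mul_divX_add (f j)
    rw [X_dvd_iff.mp (hf j hj), map_zero, add_zero] at this
    rw [← mul_pow, this]
  have hcoeff : (∏ j ∈ s, (f j).divX ^ e j).coeff 0 = ∏ j ∈ s, (f j).coeff 1 ^ e j := by
    rw [coeff_zero_eq_eval_zero, eval_prod]
    simp only [eval_pow, ← coeff_zero_eq_eval_zero, coeff_divX]
  rw [hprod, ← hcoeff]
  exact X_pow_succ_dvd_X_pow_mul_sub _ _

theorem X_pow_succ_dvd_pow_sub {f : R[X]} (hf : X ∣ f) (d : ℕ) :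
    X ^ (d + 1) ∣ f ^ d - C (f.coeff 1 ^ d) * X ^ d := by
  simpa using X_pow_succ_dvd_prod_pow_sub {()} (fun _ => f) (fun _ => d) (by simpa)

theorem coeff_eq_of_mk_eq_mk {n m : ℕ} {p q : R[X]}
    (h : Ideal.Quotient.mk (Ideal.span {X ^ n}) p = Ideal.Quotient.mk (Ideal.span {X ^ n}) q)
    (hm : m < n) : p.coeff m = q.coeff m := by
  rw [Ideal.Quotient.eq, Ideal.mem_span_singleton, X_pow_dvd_iff] at h
  simpa [sub_eq_zero] using h m hm

theorem smul_mk_eq_mk_C_mul (I : Ideal R[X]) (r : R) (p : R[X]) :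
    r • Ideal.Quotient.mk I p = Ideal.Quotient.mk I (C r * p) := by
  rw [← smul_eq_C_mul, ← Ideal.Quotient.mkₐ_eq_mk R, map_smul]

theorem eq_of_smul_mk_X_pow_eq {d : ℕ} {r s : R}
    (h : r • Ideal.Quotient.mk (Ideal.span {(X : R[X]) ^ (d + 1)}) (X ^ d) =
      s • Ideal.Quotient.mk (Ideal.span {X ^ (d + 1)}) (X ^ d)) : r = s := by
  rw [smul_mk_eq_mk_C_mul, smul_mk_eq_mk_C_mul] at h
  simpa using coeff_eq_of_mk_eq_mk h d.lt_succ_self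

end Polynomial

theorem MvPolynomial.algHom_apply_eq_mk_aeval {σ R B : Type*} [CommRing R] [CommRing B]
    [Algebra R B] {I : Ideal B} (α : MvPolynomial σ R →ₐ[R] B ⧸ I) {f : σ → B}
    (hf : ∀ j, Ideal.Quotient.mk I (f j) = α (X j)) (p : MvPolynomial σ R) :
    α p = Ideal.Quotient.mk I (aeval f p) := by
  rw [← Ideal.Quotient.mkₐ_eq_mk R, ← AlgHom.comp_apply]
  refine DFunLike.congr_fun (algHom_ext fun j => ?_) p
  rw [AlgHom.comp_apply, aeval_X, Ideal.Quotient.mkₐ_eq_mk, hf]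

theorem stmt19_general (n k : ℕ) (a : Fin n → ℕ) (ha : ∑ i, a i = k - 1)
    (α : MvPolynomial (Fin n) ℂ →ₐ[ℂ]
      (Polynomial ℂ ⧸ Ideal.span {(Polynomial.X : Polynomial ℂ) ^ k}))
    (hα : ∀ i : Fin n, α (X i) ∈
      Ideal.map (Ideal.Quotient.mk (Ideal.span {(Polynomial.X : Polynomial ℂ) ^ k}))
        (Ideal.span {(Polynomial.X : Polynomial ℂ)}))
    (c : ℂ) (hc : c ≠ 0)
    (hm : α (monomial (Finsupp.equivFunOnFinite.symm a) 1) =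
      c • Ideal.Quotient.mk (Ideal.span {(Polynomial.X : Polynomial ℂ) ^ k})
        (Polynomial.X ^ (k - 1))) :
    ∀ i : Fin n, a i ≠ 0 → ∀ g : Polynomial ℂ,
      α (X i) = Ideal.Quotient.mk (Ideal.span {(Polynomial.X : Polynomial ℂ) ^ k}) g →
        g.coeff 1 ≠ 0 ∧
          α (monomial (Finsupp.equivFunOnFinite.symm a) 1 -
              C (c / g.coeff 1 ^ (k - 1)) * X i ^ (k - 1)) = 0 := by
  intro i hi g hg
  have hai : a i ≤ k - 1 :=
    ha ▸ Finset.single_le_sum (fun _ _ => Nat.zero_le _) (Finset.mem_univ i)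
  obtain ⟨d, rfl⟩ : ∃ d, k = d + 1 := ⟨k - 1, by omega⟩
  rw [Nat.add_sub_cancel] at ha hai hm ⊢
  set mk := Ideal.Quotient.mk (Ideal.span {(Polynomial.X : Polynomial ℂ) ^ (d + 1)})
  choose f hfspan hf using fun j =>
    (Ideal.mem_map_iff_of_surjective mk Ideal.Quotient.mk_surjective).mp (hα j)
  have hfX : ∀ j, Polynomial.X ∣ f j := fun j => Ideal.mem_span_singleton.mp (hfspan j)
  have hαm : α (monomial (Finsupp.equivFunOnFinite.symm a) 1) =
      (∏ j, (f j).coeff 1 ^ a j) • mk (Polynomial.X ^ d) := by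
    rw [algHom_apply_eq_mk_aeval α hf, aeval_monomial, map_one, one_mul,
      Finsupp.prod_fintype _ _ (by simp), Polynomial.smul_mk_eq_mk_C_mul, Ideal.Quotient.eq,
      Ideal.mem_span_singleton, ← ha]
    exact Polynomial.X_pow_succ_dvd_prod_pow_sub _ f a fun j _ => hfX j
  have hαXi : α (X i ^ d) = (f i).coeff 1 ^ d • mk (Polynomial.X ^ d) := by
    rw [algHom_apply_eq_mk_aeval α hf, map_pow, aeval_X, Polynomial.smul_mk_eq_mk_C_mul,
      Ideal.Quotient.eq, Ideal.mem_span_singleton]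
    exact Polynomial.X_pow_succ_dvd_pow_sub (hfX i) d
  have hcb : c = ∏ j, (f j).coeff 1 ^ a j := Polynomial.eq_of_smul_mk_X_pow_eq (hm ▸ hαm)
  have hb : (f i).coeff 1 ≠ 0 := fun hb0 =>
    hc (hcb ▸ Finset.prod_eq_zero (Finset.mem_univ i) (by rw [hb0, zero_pow hi]))
  have hgi : g.coeff 1 = (f i).coeff 1 :=
    Polynomial.coeff_eq_of_mk_eq_mk (hg ▸ (hf i).symm) (by omega)
  refine ⟨hgi ▸ hb, ?_⟩
  rw [map_sub, map_mul, ← MvPolynomial.algebraMap_eq, AlgHom.commutes, ← Algebra.smul_def,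
    hm, hαXi, smul_smul, hgi, div_mul_cancel₀ c (pow_ne_zero d hb), sub_self]

/-- Key step for projections away from mixed top-degree monomials: let `k > 3`, let `m` be a
mixed monomial of degree `k − 1`, and let `α : ℂ[x₁,…,xₙ] → ℂ[x]/(x^k)` be an algebra map
sending each variable into `(x)`. If `α(m) = c·x^{k−1}` with `c ≠ 0`, then for every variable
`xᵢ` dividing `m`, writing `α(xᵢ) = a₁x + a₂x² + ⋯`, one has `a₁ ≠ 0` and
`m − (c/a₁^{k−1})·xᵢ^{k−1} ∈ ker α`. -/
theorem stmt19 (n k : ℕ) (hk : 3 < k) (a : Fin n → ℕ) (ha : ∑ i, a i = k - 1)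
    (hmixed : ∃ i j : Fin n, i ≠ j ∧ a i ≠ 0 ∧ a j ≠ 0)
    (α : MvPolynomial (Fin n) ℂ →ₐ[ℂ]
      (Polynomial ℂ ⧸ Ideal.span {(Polynomial.X : Polynomial ℂ) ^ k}))
    (hα : ∀ i : Fin n, α (X i) ∈
      Ideal.map (Ideal.Quotient.mk (Ideal.span {(Polynomial.X : Polynomial ℂ) ^ k}))
        (Ideal.span {(Polynomial.X : Polynomial ℂ)}))
    (c : ℂ) (hc : c ≠ 0)
    (hm : α (monomial (Finsupp.equivFunOnFinite.symm a) 1) =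
      c • Ideal.Quotient.mk (Ideal.span {(Polynomial.X : Polynomial ℂ) ^ k})
        (Polynomial.X ^ (k - 1))) :
    ∀ i : Fin n, a i ≠ 0 → ∀ g : Polynomial ℂ,
      α (X i) = Ideal.Quotient.mk (Ideal.span {(Polynomial.X : Polynomial ℂ) ^ k}) g →
        g.coeff 1 ≠ 0 ∧
          α (monomial (Finsupp.equivFunOnFinite.symm a) 1 -
              C (c / g.coeff 1 ^ (k - 1)) * X i ^ (k - 1)) = 0 :=
  stmt19_general n k a ha α hα c hc hm
end
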